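/- Let ω_j = sqrt(j² + ρ) for integers j with |j| ≤ M and ρ ≥ 0, with ω_0 = sqrt(ρ) > 1 assumed (or ω_j ≥ c > 1 for all j). Then for every fixed K, the sum over all multi-indices k = (k_l)_{|l|≤M} with Σ_l |k_l| ≤ K of the products Π_l ω_l^{−2|k_l|} is bounded by a constant depending only on K and ρ, uniformly in M. -/

import Mathlib

open Finset

lemma aux_sum_range (ρ : ℝ) (hρ : 1 < ρ) (N : ℕ) :
    ∑ n ∈ Finset.range N, (((n : ℝ)) ^ 2 + ρ)⁻¹ ≤ 4 := by
  have h1 : ∀ n : ℕ, (((n : ℝ)) ^ 2 + ρ)⁻¹ ≤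
      4 * ((n : ℝ) + 1)⁻¹ - 4 * ((n + 1 : ℕ) + 1 : ℝ)⁻¹ := by
    intro n
    have hn : (0:ℝ) ≤ n := Nat.cast_nonneg n
    have h1 : (0:ℝ) < (n:ℝ) + 1 := by linarith
    have h2 : (0:ℝ) < (n:ℝ) + 2 := by linarith
    have h3 : (0:ℝ) < (n:ℝ)^2 + ρ := by nlinarith
    have e : 4 * ((n : ℝ) + 1)⁻¹ - 4 * ((n + 1 : ℕ) + 1 : ℝ)⁻¹
        = 4 / (((n:ℝ) + 1) * ((n:ℝ) + 2)) := by
      push_cast; field_simp; ring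
    rw [e, inv_eq_one_div, div_le_div_iff₀ h3 (by positivity)]
    nlinarith
  calc ∑ n ∈ Finset.range N, (((n : ℝ)) ^ 2 + ρ)⁻¹
      ≤ ∑ n ∈ Finset.range N, (4 * ((n : ℝ) + 1)⁻¹ - 4 * ((n + 1 : ℕ) + 1 : ℝ)⁻¹) :=
        Finset.sum_le_sum fun n _ => h1 n
    _ = 4 * ((0:ℕ) + 1 : ℝ)⁻¹ - 4 * ((N : ℝ) + 1)⁻¹ := by
        rw [Finset.sum_range_sub' (f := fun n : ℕ => 4 * ((n : ℝ) + 1)⁻¹)]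
    _ ≤ 4 := by
        have : (0:ℝ) ≤ 4 * ((N : ℝ) + 1)⁻¹ := by positivity
        norm_num; linarith

lemma aux_sum_Icc (ρ : ℝ) (hρ : 1 < ρ) (M : ℕ) :
    ∑ l ∈ Finset.Icc (-(M : ℤ)) (M : ℤ), (((l : ℝ)) ^ 2 + ρ)⁻¹ ≤ 8 := by
  have hmap : ∀ l ∈ Finset.Icc (-(M : ℤ)) (M : ℤ), l.natAbs ∈ Finset.range (M + 1) := by
    intro l hl
    simp only [Finset.mem_Icc] at hl
    simp only [Finset.mem_range]
    omega
  rw [← Finset.sum_fiberwise_of_maps_to hmap (fun l => (((l : ℝ)) ^ 2 + ρ)⁻¹)]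
  have hfiber : ∀ n ∈ Finset.range (M + 1),
      ∑ l ∈ (Finset.Icc (-(M : ℤ)) (M : ℤ)).filter (fun l => l.natAbs = n),
        (((l : ℝ)) ^ 2 + ρ)⁻¹ ≤ 2 * (((n : ℝ)) ^ 2 + ρ)⁻¹ := by
    intro n _
    have hval : ∀ l ∈ (Finset.Icc (-(M : ℤ)) (M : ℤ)).filter (fun l => l.natAbs = n),
        (((l : ℝ)) ^ 2 + ρ)⁻¹ = (((n : ℝ)) ^ 2 + ρ)⁻¹ := by
      intro l hl
      simp only [Finset.mem_filter] at hl
      have : ((l : ℝ)) ^ 2 = ((n : ℝ)) ^ 2 := by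
        rw [← hl.2]
        rw [← sq_abs ((l : ℝ))]
        congr 1
        rw [Nat.cast_natAbs]
        push_cast
        rfl
      rw [this]
    rw [Finset.sum_congr rfl hval, Finset.sum_const, nsmul_eq_mul]
    have hcard : ((Finset.Icc (-(M : ℤ)) (M : ℤ)).filter (fun l => l.natAbs = n)).card ≤ 2 := by
      have hsub : (Finset.Icc (-(M : ℤ)) (M : ℤ)).filter (fun l => l.natAbs = n)
          ⊆ {(n : ℤ), -(n : ℤ)} := by
        intro l hl
        simp only [Finset.mem_filter] at hl
        have := hl.2
        rcases Int.natAbs_eq l with h | h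
        · simp [Finset.mem_insert]; left; omega
        · simp [Finset.mem_insert]; right; omega
      calc _ ≤ ({(n : ℤ), -(n : ℤ)} : Finset ℤ).card := Finset.card_le_card hsub
        _ ≤ 2 := Finset.card_insert_le _ _ |>.trans (by simp)
    have hpos : (0:ℝ) ≤ (((n : ℝ)) ^ 2 + ρ)⁻¹ := by positivity
    have h2 : (((Finset.Icc (-(M : ℤ)) (M : ℤ)).filter (fun l => l.natAbs = n)).card : ℝ) ≤ (2:ℝ) := by
      exact_mod_cast hcard
    have := mul_le_mul_of_nonneg_right h2 hpos
    linarith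
  calc _ ≤ ∑ n ∈ Finset.range (M + 1), 2 * (((n : ℝ)) ^ 2 + ρ)⁻¹ :=
        Finset.sum_le_sum hfiber
    _ = 2 * ∑ n ∈ Finset.range (M + 1), (((n : ℝ)) ^ 2 + ρ)⁻¹ := by
        rw [Finset.mul_sum]
    _ ≤ 2 * 4 := by
        have := aux_sum_range ρ hρ (M + 1)
        linarith
    _ = 8 := by norm_num

lemma aux_factor (K : ℕ) (x : ℝ) (hx0 : 0 < x) (hx1 : x ≤ 1) :
    ∑ j : (Finset.Icc (-(K : ℤ)) (K : ℤ)), x ^ ((j : ℤ)).natAbs ≤ 1 + 2 * K * x := by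
  have hcard : Fintype.card (Finset.Icc (-(K : ℤ)) (K : ℤ)) = 2 * K + 1 := by
    rw [Fintype.card_coe, Int.card_Icc]
    omega
  have hpt : ∀ j : (Finset.Icc (-(K : ℤ)) (K : ℤ)),
      x ^ ((j : ℤ)).natAbs ≤ x + (if ((j : ℤ)) = 0 then 1 - x else 0) := by
    intro j
    by_cases h : ((j : ℤ)) = 0
    · simp [h]
    · have h1 : 1 ≤ ((j : ℤ)).natAbs := by omega
      have : x ^ ((j : ℤ)).natAbs ≤ x ^ 1 := pow_le_pow_of_le_one hx0.le hx1 h1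
      simpa [h] using this
  calc ∑ j : (Finset.Icc (-(K : ℤ)) (K : ℤ)), x ^ ((j : ℤ)).natAbs
      ≤ ∑ j : (Finset.Icc (-(K : ℤ)) (K : ℤ)),
          (x + (if ((j : ℤ)) = 0 then 1 - x else 0)) :=
        Finset.sum_le_sum fun j _ => hpt j
    _ = (2 * K + 1) * x + ∑ j : (Finset.Icc (-(K : ℤ)) (K : ℤ)),
          (if ((j : ℤ)) = 0 then 1 - x else 0) := by
        rw [Finset.sum_add_distrib, Finset.sum_const, Finset.card_univ, hcard,
          nsmul_eq_mul]
        push_cast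
        ring_nf
    _ ≤ (2 * K + 1) * x + (1 - x) := by
        gcongr
        have hsub : (Finset.univ.filter (fun j : (Finset.Icc (-(K : ℤ)) (K : ℤ)) =>
            ((j : ℤ)) = 0)).card ≤ 1 := by
          apply Finset.card_le_one.2
          intro a ha b hb
          simp only [Finset.mem_filter] at ha hb
          exact Subtype.ext (ha.2.trans hb.2.symm)
        rw [Finset.sum_ite, Finset.sum_const, Finset.sum_const_zero, add_zero, nsmul_eq_mul]
        have hx : (0:ℝ) ≤ 1 - x := by linarith
        have : ((Finset.univ.filter (fun j : (Finset.Icc (-(K : ℤ)) (K : ℤ)) =>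
            ((j : ℤ)) = 0)).card : ℝ) ≤ 1 := by exact_mod_cast hsub
        nlinarith
    _ ≤ 1 + 2 * K * x := by ring_nf; linarith

/-- Uniform-in-dimension bound for `∑_{‖k‖ ≤ K} ω^{−2|k|}` where
`ω_l = √(l² + ρ)` for `|l| ≤ M`, under `ω_0 = √ρ > 1` (i.e. `ρ > 1`):
`∑_k ∏_l ω_l^{−2|k_l|} = ∑_k ∏_l (l² + ρ)^{−|k_l|} ≤ C(K, ρ)`, uniformly in `M`. -/
theorem multiindex_omega_sum_uniform_bound (ρ : ℝ) (hρ : 1 < ρ) (K : ℕ) :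
    ∃ C : ℝ, ∀ M : ℕ,
      ∑ k ∈ (Finset.univ :
            Finset ((Finset.Icc (-(M : ℤ)) (M : ℤ)) → (Finset.Icc (-(K : ℤ)) (K : ℤ)))).filter
          (fun k => ∑ l, ((k l : ℤ)).natAbs ≤ K),
        ∏ l : (Finset.Icc (-(M : ℤ)) (M : ℤ)),
          ((((l : ℤ) : ℝ) ^ 2 + ρ)⁻¹) ^ ((k l : ℤ)).natAbs ≤ C := by
  refine ⟨Real.exp (2 * K * 8), fun M => ?_⟩
  set a : ℤ → ℝ := fun l => (((l : ℝ)) ^ 2 + ρ)⁻¹ with ha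
  have ha_pos : ∀ l : ℤ, 0 < a l := by
    intro l; simp only [ha]; positivity
  have ha_le_one : ∀ l : ℤ, a l ≤ 1 := by
    intro l; simp only [ha]
    rw [inv_le_one_iff₀]
    right
    nlinarith [sq_nonneg ((l:ℝ))]
  calc ∑ k ∈ (Finset.univ :
            Finset ((Finset.Icc (-(M : ℤ)) (M : ℤ)) → (Finset.Icc (-(K : ℤ)) (K : ℤ)))).filter
          (fun k => ∑ l, ((k l : ℤ)).natAbs ≤ K),
        ∏ l : (Finset.Icc (-(M : ℤ)) (M : ℤ)),
          ((((l : ℤ) : ℝ) ^ 2 + ρ)⁻¹) ^ ((k l : ℤ)).natAbs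
      ≤ ∑ k : ((Finset.Icc (-(M : ℤ)) (M : ℤ)) → (Finset.Icc (-(K : ℤ)) (K : ℤ))),
          ∏ l : (Finset.Icc (-(M : ℤ)) (M : ℤ)),
            ((((l : ℤ) : ℝ) ^ 2 + ρ)⁻¹) ^ ((k l : ℤ)).natAbs := by
        apply Finset.sum_le_sum_of_subset_of_nonneg (Finset.filter_subset _ _)
        intro k _ _
        apply Finset.prod_nonneg
        intro l _
        positivity
    _ = ∏ l : (Finset.Icc (-(M : ℤ)) (M : ℤ)),
          ∑ j : (Finset.Icc (-(K : ℤ)) (K : ℤ)), (a (l : ℤ)) ^ ((j : ℤ)).natAbs := by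
        rw [Finset.prod_univ_sum]
        rw [Fintype.piFinset_univ]
    _ ≤ ∏ l : (Finset.Icc (-(M : ℤ)) (M : ℤ)), (1 + 2 * K * a (l : ℤ)) := by
        apply Finset.prod_le_prod
        · intro l _
          apply Finset.sum_nonneg
          intro j _
          positivity
        · intro l _
          exact aux_factor K (a (l : ℤ)) (ha_pos _) (ha_le_one _)
    _ ≤ ∏ l : (Finset.Icc (-(M : ℤ)) (M : ℤ)), Real.exp (2 * K * a (l : ℤ)) := by
        apply Finset.prod_le_prod
        · intro l _
          have := ha_pos (l : ℤ)
          positivity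
        · intro l _
          have := Real.add_one_le_exp (2 * K * a (l : ℤ))
          linarith
    _ = Real.exp (∑ l : (Finset.Icc (-(M : ℤ)) (M : ℤ)), 2 * K * a (l : ℤ)) := by
        rw [Real.exp_sum]
    _ ≤ Real.exp (2 * K * 8) := by
        apply Real.exp_le_exp.2
        have hs : ∑ l : (Finset.Icc (-(M : ℤ)) (M : ℤ)), a (l : ℤ) ≤ 8 := by
          rw [Finset.sum_coe_sort]
          exact aux_sum_Icc ρ hρ M
        rw [← Finset.mul_sum]
        have hK : (0:ℝ) ≤ 2 * K := by positivity
        exact mul_le_mul_of_nonneg_left hs hK
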